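/- Let K be a field of characteristic zero, a, b ∈ lie_n, and d, e tangential derivations of lie_n. Then in the Lie algebra of derivations of lie_{n+1}: ⁅λ(a) + d⁺, λ(b) + e⁺⁆ = λ([a, b] + d(b) − e(a)) + (⁅d, e⁆)⁺. Moreover, the map (a, d) ↦ λ(a) + d⁺ is injective: if a ∈ lie_n and w is any derivation of lie_n with λ(a) + w⁺ = 0, then a = 0 and w = 0. -/

import Mathlib

/-!
On the generators `x_0` and `s(x_k)` of `lie_{n+1}`, both sides of the bracket formula agree:
on `s(lie_n)` they act as `s ∘ ⁅d, e⁆`, and at `x_0` the Jacobi identity turns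
`[[x_0, s a], s b] - [[x_0, s b], s a]` into `[x_0, s [a, b]]`.

For injectivity, `λ(a) + w⁺ = 0` gives `s (w y) = 0`, hence `w = 0` since `s` has a retraction,
and `[x_0, s a] = 0`. Let `lie_{n+1}` act on the free associative algebra `A` on `x_1, …, x_n`,
with `x_k` acting by left multiplication and `x_0` by projection onto the constants. Then
`[x_0, s a]` sends `1` to `-a ∈ A`, and `lie_n → A` is injective by the Dynkin–Specht–Wever
theorem: in characteristic zero, sending a word `w` to `(1 / |w|)` times its right-normed
bracketing is a left inverse.
-/

open FreeLieAlgebra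

section

variable (K : Type) [Field K] [CharZero K]

/-- `lieF K n` is the free Lie algebra over `K` on `x_1, …, x_n` (indexed by `Fin n`);
`lieF K (n+1)` is the free Lie algebra on `x_0, x_1, …, x_n`, where the generator `x_0`
is indexed by `0 : Fin (n+1)` and `x_k` (for `1 ≤ k ≤ n`) by `k.succ` with `k : Fin n`. -/
abbrev lieF (N : ℕ) : Type := FreeLieAlgebra K (Fin N)

/-- The Lie algebra of derivations of `lieF K N`. -/
abbrev DerL (N : ℕ) : Type := LieDerivation K (lieF K N) (lieF K N)

/-- The Lie algebra embedding `s : lie_n → lie_{n+1}`, `x_k ↦ x_k` for `1 ≤ k ≤ n`. -/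
noncomputable def sMap (n : ℕ) : lieF K n →ₗ⁅K⁆ lieF K (n + 1) :=
  FreeLieAlgebra.lift K fun k : Fin n => FreeLieAlgebra.of K k.succ

/-- The generator `x_0` of `lie_{n+1}`. -/
noncomputable def x0 (n : ℕ) : lieF K (n + 1) := FreeLieAlgebra.of K (0 : Fin (n + 1))

end

namespace FreeLieAlgebra

section Induction

variable {R X : Type*} [CommRing R]

theorem lieSpan_range_of :
    LieSubalgebra.lieSpan R (FreeLieAlgebra R X) (Set.range (of R)) = ⊤ := by
  set S := LieSubalgebra.lieSpan R (FreeLieAlgebra R X) (Set.range (of R))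
  let g : FreeLieAlgebra R X →ₗ⁅R⁆ S :=
    lift R fun i => ⟨of R i, LieSubalgebra.subset_lieSpan ⟨i, rfl⟩⟩
  have hg : S.incl.comp g = LieHom.id := hom_ext fun i => by simp [g]
  refine eq_top_iff.mpr fun x _ => ?_
  have hx : (g x : FreeLieAlgebra R X) = x := DFunLike.congr_fun hg x
  exact hx ▸ (g x).2

@[elab_as_elim]
theorem induction_on {p : FreeLieAlgebra R X → Prop} (x : FreeLieAlgebra R X)
    (of : ∀ i, p (of R i)) (zero : p 0) (add : ∀ x y, p x → p y → p (x + y))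
    (smul : ∀ (c : R) x, p x → p (c • x)) (lie : ∀ x y, p x → p y → p ⁅x, y⁆) : p x := by
  have hx : x ∈ LieSubalgebra.lieSpan R _ (Set.range (FreeLieAlgebra.of R)) :=
    lieSpan_range_of (R := R) (X := X) ▸ LieSubalgebra.mem_top x
  induction hx using LieSubalgebra.lieSpan_induction with
  | mem _ h => obtain ⟨i, rfl⟩ := h; exact of i
  | zero => exact zero
  | add x y _ _ hx hy => exact add x y hx hy
  | smul c x _ hx => exact smul c x hx
  | lie x y _ _ hx hy => exact lie x y hx hy

end Induction

section Dynkin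

attribute [local instance] LieRing.ofAssociativeRing

variable (K X : Type*) [Field K]

local notation "𝔸" => MonoidAlgebra K (FreeMonoid X)

noncomputable def toFreeMonoidAlgebra : FreeLieAlgebra K X →ₗ⁅K⁆ 𝔸 :=
  lift K fun i => MonoidAlgebra.single (FreeMonoid.of i) 1

noncomputable def constCoeff : 𝔸 →ₐ[K] K :=
  MonoidAlgebra.lift K K (FreeMonoid X) (FreeMonoid.lift fun _ => 0)

noncomputable def lieWord : List X → FreeLieAlgebra K X
  | [] => 0
  | [i] => of K i
  | i :: j :: l => ⁅of K i, lieWord (j :: l)⁆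

noncomputable def dynkin : 𝔸 →ₗ[K] FreeLieAlgebra K X :=
  (Finsupp.linearCombination K fun w : FreeMonoid X => lieWord K X w.toList).comp
    (MonoidAlgebra.coeffLinearEquiv K).toLinearMap

noncomputable def dynkinWeighted : 𝔸 →ₗ[K] FreeLieAlgebra K X :=
  (Finsupp.linearCombination K fun w : FreeMonoid X =>
    (w.length : K)⁻¹ • lieWord K X w.toList).comp (MonoidAlgebra.coeffLinearEquiv K).toLinearMap

noncomputable def wordsOfLength (m : ℕ) : Submodule K 𝔸 :=
  Submodule.span K ((fun w => MonoidAlgebra.single w 1) '' {w : FreeMonoid X | w.length = m})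

/-- Homogeneous elements of positive degree `m` satisfying the Dynkin–Specht–Wever relation. -/
def dynkinHomogeneous : Set (FreeLieAlgebra K X) :=
  {u | ∃ m : ℕ, 0 < m ∧ toFreeMonoidAlgebra K X u ∈ wordsOfLength K X m ∧
    dynkin K X (toFreeMonoidAlgebra K X u) = (m : K) • u}

variable {K X}

lemma toFreeMonoidAlgebra_of (i : X) :
    toFreeMonoidAlgebra K X (of K i) = MonoidAlgebra.single (FreeMonoid.of i) 1 :=
  lift_of_apply _ _

lemma constCoeff_single_one (c : K) : constCoeff K X (MonoidAlgebra.single 1 c) = c := by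
  simp [constCoeff]

lemma constCoeff_single_of_mul (i : X) (w : FreeMonoid X) (c : K) :
    constCoeff K X (MonoidAlgebra.single (FreeMonoid.of i * w) c) = 0 := by
  simp [constCoeff]

lemma constCoeff_toFreeMonoidAlgebra (u : FreeLieAlgebra K X) :
    constCoeff K X (toFreeMonoidAlgebra K X u) = 0 := by
  induction u using induction_on with
  | of i => simpa [toFreeMonoidAlgebra_of] using constCoeff_single_of_mul (K := K) i 1 1
  | zero => simp
  | add x y hx hy => simp [hx, hy]
  | smul c x hx => simp [hx]
  | lie x y hx hy => simp [Ring.lie_def, hx, hy]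

lemma dynkin_single (w : FreeMonoid X) (c : K) :
    dynkin K X (MonoidAlgebra.single w c) = c • lieWord K X w.toList :=
  Finsupp.linearCombination_single K c w

lemma dynkinWeighted_single (w : FreeMonoid X) (c : K) :
    dynkinWeighted K X (MonoidAlgebra.single w c) =
      c • (w.length : K)⁻¹ • lieWord K X w.toList :=
  Finsupp.linearCombination_single K c w

/-- The correction term comes from the empty word: `lieWord [] = 0`, but `lieWord [i] = x_i`. -/
lemma dynkin_single_of_mul (i : X) (v : 𝔸) :
    dynkin K X (MonoidAlgebra.single (FreeMonoid.of i) 1 * v) =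
      ⁅of K i, dynkin K X v⁆ + constCoeff K X v • of K i := by
  induction v using MonoidAlgebra.induction_linear with
  | zero => simp
  | add v v' hv hv' => rw [mul_add, map_add, hv, hv', map_add, map_add, lie_add, add_smul]; abel
  | single w c =>
    rw [MonoidAlgebra.single_mul_single, one_mul, dynkin_single, dynkin_single, lie_smul]
    cases w using FreeMonoid.casesOn with
    | one => simp [constCoeff_single_one, lieWord]
    | of_mul j w => simp [constCoeff_single_of_mul, lieWord]

lemma dynkin_toFreeMonoidAlgebra_mul (u : FreeLieAlgebra K X) {v : 𝔸}
    (hv : constCoeff K X v = 0) :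
    dynkin K X (toFreeMonoidAlgebra K X u * v) = ⁅u, dynkin K X v⁆ := by
  induction u using induction_on generalizing v with
  | of i => simp [toFreeMonoidAlgebra_of, dynkin_single_of_mul, hv]
  | zero => simp
  | add x y hx hy => rw [map_add, add_mul, map_add, hx hv, hy hv, add_lie]
  | smul c x hx => rw [map_smul, smul_mul_assoc, map_smul, hx hv, smul_lie]
  | lie x y hx hy =>
    have hxv : constCoeff K X (toFreeMonoidAlgebra K X x * v) = 0 := by simp [hv]
    have hyv : constCoeff K X (toFreeMonoidAlgebra K X y * v) = 0 := by simp [hv]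
    rw [LieHom.map_lie, Ring.lie_def, sub_mul, mul_assoc, mul_assoc, map_sub, hx hyv, hy hxv,
      hx hv, hy hv, lie_lie]

lemma mul_mem_wordsOfLength {p q : ℕ} {x y : 𝔸}
    (hx : x ∈ wordsOfLength K X p) (hy : y ∈ wordsOfLength K X q) :
    x * y ∈ wordsOfLength K X (p + q) := by
  have hle : wordsOfLength K X p * wordsOfLength K X q ≤ wordsOfLength K X (p + q) := by
    rw [wordsOfLength, wordsOfLength, Submodule.span_mul_span]
    refine Submodule.span_mono ?_
    rintro _ ⟨_, ⟨w, hw, rfl⟩, _, ⟨w', hw', rfl⟩, rfl⟩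
    exact ⟨w * w', by simp_all, by simp [MonoidAlgebra.single_mul_single]⟩
  exact hle (Submodule.mul_mem_mul hx hy)

lemma dynkinWeighted_eq_of_mem_wordsOfLength {m : ℕ} {x : 𝔸} (hx : x ∈ wordsOfLength K X m) :
    dynkinWeighted K X x = (m : K)⁻¹ • dynkin K X x := by
  induction hx using Submodule.span_induction with
  | mem _ h =>
    obtain ⟨w, rfl : w.length = m, rfl⟩ := h
    simp [dynkinWeighted_single, dynkin_single]
  | zero => simp
  | add x y _ _ hx hy => simp [hx, hy]
  | smul c x _ hx => rw [map_smul, map_smul, hx, smul_comm]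

lemma of_mem_dynkinHomogeneous (i : X) : of K i ∈ dynkinHomogeneous K X :=
  ⟨1, one_pos, Submodule.subset_span ⟨FreeMonoid.of i, rfl, (toFreeMonoidAlgebra_of i).symm⟩,
    by simp [toFreeMonoidAlgebra_of, dynkin_single, lieWord]⟩

lemma lie_mem_dynkinHomogeneous {u v : FreeLieAlgebra K X} (hu : u ∈ dynkinHomogeneous K X)
    (hv : v ∈ dynkinHomogeneous K X) : ⁅u, v⁆ ∈ dynkinHomogeneous K X := by
  obtain ⟨p, hp, hup, hdu⟩ := hu
  obtain ⟨q, hq, hvq, hdv⟩ := hv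
  refine ⟨p + q, by omega, ?_, ?_⟩
  · rw [LieHom.map_lie, Ring.lie_def]
    exact sub_mem (mul_mem_wordsOfLength hup hvq) (add_comm p q ▸ mul_mem_wordsOfLength hvq hup)
  · rw [LieHom.map_lie, Ring.lie_def, map_sub,
      dynkin_toFreeMonoidAlgebra_mul u (constCoeff_toFreeMonoidAlgebra v),
      dynkin_toFreeMonoidAlgebra_mul v (constCoeff_toFreeMonoidAlgebra u), hdu, hdv, lie_smul,
      lie_smul, ← lie_skew u v]
    push_cast
    module

lemma span_dynkinHomogeneous : Submodule.span K (dynkinHomogeneous K X) = ⊤ := by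
  rw [eq_top_iff]
  rintro x -
  induction x using induction_on with
  | of i => exact Submodule.subset_span (of_mem_dynkinHomogeneous i)
  | zero => exact zero_mem _
  | add x y hx hy => exact add_mem hx hy
  | smul c x hx => exact Submodule.smul_mem _ c hx
  | lie x y hx hy =>
    have hxy := Submodule.apply_mem_map₂ (LieModule.toEnd K _ (FreeLieAlgebra K X)).toLinearMap
      hx hy
    rw [Submodule.map₂_span_span] at hxy
    refine Submodule.span_le.mpr ?_ hxy
    rintro _ ⟨u, hu, v, hv, rfl⟩
    exact Submodule.subset_span (lie_mem_dynkinHomogeneous hu hv)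

variable [CharZero K]

theorem dynkinWeighted_toFreeMonoidAlgebra (u : FreeLieAlgebra K X) :
    dynkinWeighted K X (toFreeMonoidAlgebra K X u) = u := by
  have hu : u ∈ Submodule.span K (dynkinHomogeneous K X) :=
    span_dynkinHomogeneous (K := K) ▸ trivial
  induction hu using Submodule.span_induction with
  | mem u h =>
    obtain ⟨m, hm, hum, hdu⟩ := h
    rw [dynkinWeighted_eq_of_mem_wordsOfLength hum, hdu,
      inv_smul_smul₀ (Nat.cast_ne_zero.mpr hm.ne')]
  | zero => simp
  | add x y _ _ hx hy => rw [map_add, map_add, hx, hy]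
  | smul c x _ hx => rw [map_smul, map_smul, hx]

theorem toFreeMonoidAlgebra_injective : Function.Injective (toFreeMonoidAlgebra K X) :=
  Function.LeftInverse.injective dynkinWeighted_toFreeMonoidAlgebra

theorem eq_zero_of_lie_constCoeff_lmul_eq_zero {u : FreeLieAlgebra K X}
    (h : ⁅Algebra.linearMap K 𝔸 ∘ₗ (constCoeff K X).toLinearMap,
      Algebra.lmul K 𝔸 (toFreeMonoidAlgebra K X u)⁆ = 0) : u = 0 := by
  have h1 := LinearMap.congr_fun h 1
  simp [Ring.lie_def, constCoeff_toFreeMonoidAlgebra] at h1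
  exact toFreeMonoidAlgebra_injective (by simpa using h1)

end Dynkin

end FreeLieAlgebra

namespace LieDerivation

variable {R X L M : Type*} [CommRing R] [LieRing L] [LieAlgebra R L] [LieRing M] [LieAlgebra R M]

theorem apply_lieHom_eq_zero (D : LieDerivation R L L) (f : FreeLieAlgebra R X →ₗ⁅R⁆ L)
    (h : ∀ i, D (f (FreeLieAlgebra.of R i)) = 0) (y : FreeLieAlgebra R X) : D (f y) = 0 := by
  induction y using FreeLieAlgebra.induction_on with
  | of i => exact h i
  | zero => simp
  | add x y hx hy => simp [hx, hy]
  | smul c x hx => simp [hx]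
  | lie x y hx hy => simp [hx, hy]

/-- `D` acts as the paper's `λ(a) + d⁺`, for the embedding `s` and the extra generator `x`. -/
def IsLambdaPlus (s : M →ₗ⁅R⁆ L) (x : L) (a : M) (d : LieDerivation R M M)
    (D : LieDerivation R L L) : Prop :=
  D x = ⁅x, s a⁆ ∧ ∀ y, D (s y) = s (d y)

theorem IsLambdaPlus.commutator {s : M →ₗ⁅R⁆ L} {x : L} {a b : M} {d e : LieDerivation R M M}
    {D E : LieDerivation R L L} (hD : IsLambdaPlus s x a d D) (hE : IsLambdaPlus s x b e E) :
    IsLambdaPlus s x (⁅a, b⁆ + d b - e a) ⁅d, e⁆ ⁅D, E⁆ := by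
  refine ⟨?_, fun y => by simp [hD.2, hE.2]⟩
  have jacobi : ⁅⁅x, s a⁆, s b⁆ - ⁅⁅x, s b⁆, s a⁆ = ⁅x, ⁅s a, s b⁆⁆ := by
    rw [leibniz_lie x (s a) (s b), ← lie_skew (s a)]
    abel
  rw [commutator_apply, hD.1, hE.1, apply_lie_eq_add, apply_lie_eq_add, hD.1, hE.1, hD.2, hE.2,
    map_sub, map_add, LieHom.map_lie, lie_sub, lie_add, ← jacobi]
  abel

end LieDerivation

section

variable (K : Type) [Field K]

lemma sMap_of (n : ℕ) (k : Fin n) : sMap K n (of K k) = of K k.succ :=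
  lift_of_apply _ _

lemma sMap_injective (n : ℕ) : Function.Injective (sMap K n) := by
  let r : lieF K (n + 1) →ₗ⁅K⁆ lieF K n := lift K (Fin.cases 0 (of K))
  have hr : r.comp (sMap K n) = LieHom.id := hom_ext fun k => by simp [r, sMap_of]
  exact Function.LeftInverse.injective (DFunLike.congr_fun hr)

section

attribute [local instance] LieRing.ofAssociativeRing

lemma eq_zero_of_lie_x0_sMap_eq_zero [CharZero K] {n : ℕ} {a : lieF K n}
    (h : ⁅x0 K n, sMap K n a⁆ = 0) : a = 0 := by
  let ρ : lieF K (n + 1) →ₗ⁅K⁆ Module.End K (MonoidAlgebra K (FreeMonoid (Fin n))) :=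
    lift K <| Fin.cases (Algebra.linearMap K _ ∘ₗ (constCoeff K (Fin n)).toLinearMap)
      fun k => Algebra.lmul K _ (MonoidAlgebra.single (FreeMonoid.of k) 1)
  have hρs : ρ.comp (sMap K n) = (Algebra.lmul K _).toLieHom.comp (toFreeMonoidAlgebra K _) :=
    hom_ext fun k => by simp [ρ, sMap_of, toFreeMonoidAlgebra_of]
  have hρ0 : ρ (x0 K n) = Algebra.linearMap K _ ∘ₗ (constCoeff K (Fin n)).toLinearMap :=
    lift_of_apply _ _
  refine eq_zero_of_lie_constCoeff_lmul_eq_zero ?_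
  rw [← hρ0, ← AlgHom.toLieHom_apply, ← LieHom.comp_apply, ← hρs, LieHom.comp_apply,
    ← LieHom.map_lie, h, map_zero]

end

theorem LieDerivation.IsLambdaPlus.eq {n : ℕ} {a : lieF K n} {d : DerL K n}
    {D D' : DerL K (n + 1)} (hD : IsLambdaPlus (sMap K n) (x0 K n) a d D)
    (hD' : IsLambdaPlus (sMap K n) (x0 K n) a d D') : D = D' := by
  refine LieDerivation.ext_of_lieSpan_eq_top _ lieSpan_range_of ?_
  rintro _ ⟨i, rfl⟩
  induction i using Fin.cases with
  | zero => exact hD.1.trans hD'.1.symm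
  | succ k => rw [← sMap_of, hD.2, hD'.2]

end

variable (K : Type) [Field K] [CharZero K]

/-- With `λ : lie_n → Der(lie_{n+1})` sending `a` to the derivation with
`λ(a)(x_0) = [x_0, s(a)]` and `λ(a)(x_k) = 0` for `1 ≤ k ≤ n`:  for `a, b ∈ lie_n` and
tangential derivations `d, e` of `lie_n`,
`⁅λ(a) + d⁺, λ(b) + e⁺⁆ = λ([a,b] + d(b) - e(a)) + (⁅d,e⁆)⁺` in `Der(lie_{n+1})`.
Moreover the map `(a, d) ↦ λ(a) + d⁺` is injective: if `λ(a) + w⁺ = 0` for any derivation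
`w` of `lie_n`, then `a = 0` and `w = 0`. -/
theorem lambda_plus_bracket_and_injective (n : ℕ)
    (lam : lieF K n → DerL K (n + 1))
    (hlam0 : ∀ a : lieF K n, lam a (x0 K n) = ⁅x0 K n, sMap K n a⁆)
    (hlam : ∀ a : lieF K n, ∀ k : Fin n, lam a (FreeLieAlgebra.of K k.succ) = 0) :
    (∀ (a b : lieF K n) (d e : DerL K n)
      (ad : Fin n → lieF K n)
      (_ : ∀ k : Fin n, d (FreeLieAlgebra.of K k) = ⁅FreeLieAlgebra.of K k, ad k⁆)
      (be : Fin n → lieF K n)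
      (_ : ∀ k : Fin n, e (FreeLieAlgebra.of K k) = ⁅FreeLieAlgebra.of K k, be k⁆)
      (dp ep dep : DerL K (n + 1))
      (_ : dp (x0 K n) = 0) (_ : ∀ w : lieF K n, dp (sMap K n w) = sMap K n (d w))
      (_ : ep (x0 K n) = 0) (_ : ∀ w : lieF K n, ep (sMap K n w) = sMap K n (e w))
      (_ : dep (x0 K n) = 0)
      (_ : ∀ w : lieF K n, dep (sMap K n w) = sMap K n (⁅d, e⁆ w)),
      ⁅lam a + dp, lam b + ep⁆ = lam (⁅a, b⁆ + d b - e a) + dep) ∧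
    (∀ (a : lieF K n) (w : DerL K n) (wp : DerL K (n + 1)),
      wp (x0 K n) = 0 → (∀ y : lieF K n, wp (sMap K n y) = sMap K n (w y)) →
      lam a + wp = 0 → a = 0 ∧ w = 0) := by
  have hlam_sMap : ∀ c y, lam c (sMap K n y) = 0 := fun c =>
    (lam c).apply_lieHom_eq_zero (sMap K n) fun k => by rw [sMap_of]; exact hlam c k
  have isLambdaPlus : ∀ a d (D : DerL K (n + 1)), D (x0 K n) = 0 →
      (∀ y, D (sMap K n y) = sMap K n (d y)) →
      LieDerivation.IsLambdaPlus (sMap K n) (x0 K n) a d (lam a + D) := fun a d D h0 hs =>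
    ⟨by simp [hlam0, h0], fun y => by simp [hlam_sMap, hs]⟩
  refine ⟨fun a b d e _ _ _ _ dp ep dep hdp0 hdps hep0 heps hdep0 hdeps => ?_,
    fun a w wp hwp0 hwps h => ?_⟩
  · exact ((isLambdaPlus a d dp hdp0 hdps).commutator (isLambdaPlus b e ep hep0 heps)).eq K
      (isLambdaPlus _ _ dep hdep0 hdeps)
  · obtain ⟨hx0, hs⟩ := h ▸ isLambdaPlus a w wp hwp0 hwps
    refine ⟨eq_zero_of_lie_x0_sMap_eq_zero K hx0.symm, LieDerivation.ext fun y => ?_⟩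
    exact sMap_injective K n (by simpa using (hs y).symm)
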